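/- arXiv:2102.05563 — 2 statements merged into one kernel-verified Lean document; each statement's English description precedes it below -/
import Mathlib

section
/- With notation as in the previous context (F, G, and the section r of the projection p), the image p(Z(F) ∩ Z(G)) ⊂ 𝔸² equals the zero locus of the polynomial H_R = 4 y_R² z_R⁶ X³ − 9 x_R⁴ z_R⁴ X² T² + (6 x_R⁵ z_R² − 12 a x_R² z_R⁸ − 6 b x_R² z_R⁵) X T⁴ − (12 c x_R² z_R⁵ + 6 b x_R² z_R⁸) X T + (4 a c z_R⁶ + 8 a x_R³ z_R⁶ − b² z_R⁶ + 2 b x_R³ z_R³ − x_R⁶) T⁶ − 2(4 a c z_R⁹ − 2 c x_R³ z_R³ − 3 b x_R³ z_R⁶ − b² z_R⁹) T³ + 4 a c z_R¹² + 4 c x_R³ z_R⁶ − b² z_R¹². Equivalently, there is a polynomial identity H_R(X,T) = −4 y_R² z_R⁶ · F(r(X,T)) in k[X,T], so that a point (X,T) ∈ k² satisfies H_R(X,T) = 0 if and only if r(X,T) ∈ Z(F) ∩ Z(G). -/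
open MvPolynomial

set_option maxHeartbeats 1600000 in
/-- `p(Z(F) ∩ Z(G))` is the zero locus of `H_R`: as polynomials in `k[X,T]`
one has `H_R = −4 y_R² z_R⁶ · F(r(X,T))` (denominators cleared), and pointwise a point
`(X,T)` satisfies `H_R(X,T) = 0` iff `r(X,T) ∈ Z(F) ∩ Z(G)`. Here `X := X 0`, `T := X 1`
in `MvPolynomial (Fin 2) k`. -/
theorem stmt2 {k : Type*} [Field k] (hchar2 : (2 : k) ≠ 0) (hchar3 : (3 : k) ≠ 0)
    (a b c : k) (ha : a ≠ 0) (hc : c ≠ 0)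
    (xR yR zR : k) (hy : yR ≠ 0) (hz : zR ≠ 0)
    (hR : yR ^ 2 = xR ^ 3 + a * zR ^ 6 + b * zR ^ 3 + c)
    (F : k → k → k → k)
    (hF : ∀ X Y T, F X Y T = Y ^ 2 - X ^ 3 - a * T ^ 6 - b * T ^ 3 - c)
    (G : k → k → k → k)
    (hG : ∀ X Y T, G X Y T = 3 * xR ^ 2 * zR ^ 2 * X * T - 2 * yR * zR ^ 3 * Y
      - (xR ^ 3 - 2 * a * zR ^ 6 - b * zR ^ 3) * T ^ 3 + 2 * c * zR ^ 3 + b * zR ^ 6)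
    (r : k × k → k × k × k)
    (hr : ∀ X T, r (X, T) = (X, (3 * xR ^ 2 * zR ^ 2 * X * T
      - (xR ^ 3 - 2 * a * zR ^ 6 - b * zR ^ 3) * T ^ 3 + 2 * c * zR ^ 3 + b * zR ^ 6)
        / (2 * yR * zR ^ 3), T))
    (HR : MvPolynomial (Fin 2) k)
    (hHR : HR =
      C (4 * yR ^ 2 * zR ^ 6) * X 0 ^ 3 - C (9 * xR ^ 4 * zR ^ 4) * X 0 ^ 2 * X 1 ^ 2
      + C (6 * xR ^ 5 * zR ^ 2 - 12 * a * xR ^ 2 * zR ^ 8 - 6 * b * xR ^ 2 * zR ^ 5)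
          * X 0 * X 1 ^ 4
      - C (12 * c * xR ^ 2 * zR ^ 5 + 6 * b * xR ^ 2 * zR ^ 8) * X 0 * X 1
      + C (4 * a * c * zR ^ 6 + 8 * a * xR ^ 3 * zR ^ 6 - b ^ 2 * zR ^ 6
          + 2 * b * xR ^ 3 * zR ^ 3 - xR ^ 6) * X 1 ^ 6
      - C (2 * (4 * a * c * zR ^ 9 - 2 * c * xR ^ 3 * zR ^ 3 - 3 * b * xR ^ 3 * zR ^ 6
          - b ^ 2 * zR ^ 9)) * X 1 ^ 3
      + C (4 * a * c * zR ^ 12 + 4 * c * xR ^ 3 * zR ^ 6 - b ^ 2 * zR ^ 12)) :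
    (HR = -(C (3 * xR ^ 2 * zR ^ 2) * X 0 * X 1
        - C (xR ^ 3 - 2 * a * zR ^ 6 - b * zR ^ 3) * X 1 ^ 3
        + C (2 * c * zR ^ 3 + b * zR ^ 6)) ^ 2
      + C (4 * yR ^ 2 * zR ^ 6)
        * (X 0 ^ 3 + C a * X 1 ^ 6 + C b * X 1 ^ 3 + C c)) ∧
    (∀ XT : k × k, eval (fun i : Fin 2 => if i = 0 then XT.1 else XT.2) HR = 0 ↔
      (F (r XT).1 (r XT).2.1 (r XT).2.2 = 0 ∧ G (r XT).1 (r XT).2.1 (r XT).2.2 = 0)) := by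
  have hD : 2 * yR * zR ^ 3 ≠ 0 := by simp [hchar2, hy, hz]
  have hC : (C yR : MvPolynomial (Fin 2) k) ^ 2 =
      C xR ^ 3 + C a * C zR ^ 6 + C b * C zR ^ 3 + C c := by
    rw [← map_pow, hR]; simp [map_add, map_mul, map_pow]
  have h1 : HR = -(C (3 * xR ^ 2 * zR ^ 2) * X 0 * X 1
        - C (xR ^ 3 - 2 * a * zR ^ 6 - b * zR ^ 3) * X 1 ^ 3
        + C (2 * c * zR ^ 3 + b * zR ^ 6)) ^ 2
      + C (4 * yR ^ 2 * zR ^ 6)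
        * (X 0 ^ 3 + C a * X 1 ^ 6 + C b * X 1 ^ 3 + C c) := by
    rw [hHR]
    simp only [map_mul, map_add, map_sub, map_pow, map_ofNat]
    linear_combination (-(4 : MvPolynomial (Fin 2) k) * C zR ^ 6 *
      (C a * X 1 ^ 6 + C b * X 1 ^ 3 + C c)) * hC
  refine ⟨h1, ?_⟩
  rintro ⟨x, t⟩
  rw [h1, hr, hF, hG]
  simp only [map_add, map_neg, map_sub, map_mul, map_pow, eval_C, eval_X]
  have hne : (1 : Fin 2) ≠ 0 := by decide
  simp only [if_true, if_neg hne]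
  constructor
  · intro h
    constructor
    · field_simp
      linear_combination -h
    · field_simp
      ring
  · rintro ⟨h1', -⟩
    field_simp at h1'
    linear_combination -h1'
end

section
/- The point P₁ = (1, 13) lies on the elliptic curve E : y² = x³ + 6(27 + 1) = x³ + 168 over ℚ (the fiber of the elliptic surface attached to y² = x³ + 6(27 z⁶ + w⁶) above (z:w) = (1:1)), and P₁ is a point of infinite order on E(ℚ). -/
/-!
On the Mordell curve `y² = x³ + 168`, a rational point of finite order that is not divisible by
two in `E(ℚ)` would have to be killed by an even multiple, hence produce a non-trivial `2`-torsion
point; so it suffices that `E(ℚ)[2] = 0` and that `P₁ = (1, 13)` is not a double. A `2`-torsion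
point has `y = 0`, i.e. `x³ = -168`, and by the duplication formula `P₁ = 2Q` forces
`x(Q)⁴ - 1344 x(Q) = 4 (x(Q)³ + 168)`. Both equations are monic over `ℤ`, so a rational root
would be an integer, and they have no roots modulo `9` and `64` respectively.
-/

open Polynomial WeierstrassCurve.Affine

theorem not_isOfFinAddOrder_of_forall_add_self {G : Type*} [AddMonoid G] {P : G}
    (htor : ∀ T : G, T + T = 0 → T = 0) (hP : ∀ Q : G, Q + Q ≠ P) : ¬IsOfFinAddOrder P := by
  intro hfin
  have hmP : addOrderOf P • P = 0 := addOrderOf_nsmul_eq_zero P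
  obtain ⟨k, hk | hk⟩ := Nat.even_or_odd' (addOrderOf P)
  · have hk0 : 0 < k := by have := hfin.addOrderOf_pos; omega
    have hkP : k • P = 0 := htor _ (by rw [← add_nsmul, ← two_mul, ← hk, hmP])
    have := Nat.le_of_dvd hk0 (addOrderOf_dvd_of_nsmul_eq_zero hkP)
    omega
  · refine hP ((k + 1) • P) ?_
    rw [← add_nsmul, show k + 1 + (k + 1) = addOrderOf P + 1 by omega, add_nsmul, hmP, zero_add,
      one_nsmul]

theorem Rat.exists_int_eq_of_aeval_eq_zero {p : ℤ[X]} (hp : p.Monic) {x : ℚ}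
    (hx : aeval x p = 0) : ∃ z : ℤ, x = z := by
  obtain ⟨z, hz, -⟩ := exists_integer_of_is_root_of_monic hp hx
  exact ⟨z, by simpa using hz⟩

lemma rat_pow_three_add_168_ne_zero (x : ℚ) : x ^ 3 + 168 ≠ 0 := by
  intro h
  obtain ⟨z, rfl⟩ := Rat.exists_int_eq_of_aeval_eq_zero (p := X ^ 3 + 168) (x := x)
    (by monicity!) (by simpa [map_ofNat] using h)
  have hz := congrArg (Int.cast : ℤ → ZMod 9) (show z ^ 3 + 168 = 0 by exact_mod_cast h)
  push_cast at hz
  generalize (z : ZMod 9) = t at hz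
  revert t; decide

lemma rat_quartic_ne_zero (x : ℚ) : x ^ 4 - 4 * x ^ 3 - 1344 * x - 672 ≠ 0 := by
  intro h
  obtain ⟨z, rfl⟩ := Rat.exists_int_eq_of_aeval_eq_zero
    (p := X ^ 4 - 4 * X ^ 3 - 1344 * X - 672) (x := x) (by monicity!) (by simpa [map_ofNat] using h)
  have hz := congrArg (Int.cast : ℤ → ZMod 64)
    (show z ^ 4 - 4 * z ^ 3 - 1344 * z - 672 = 0 by exact_mod_cast h)
  push_cast at hz
  generalize (z : ZMod 64) = t at hz
  revert t; decide

def mordellCurve {R : Type*} [CommRing R] (B : R) : WeierstrassCurve.Affine R :=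
  { a₁ := 0, a₂ := 0, a₃ := 0, a₄ := 0, a₆ := B }

namespace mordellCurve

variable {F : Type*} [Field F] {B : F}

lemma equation_iff {x y : F} : (mordellCurve B).Equation x y ↔ y ^ 2 = x ^ 3 + B := by
  simp [WeierstrassCurve.Affine.equation_iff, mordellCurve]

lemma negY_eq (x y : F) : (mordellCurve B).negY x y = -y := by
  simp [negY, mordellCurve]

variable [DecidableEq F] [NeZero (2 : F)]

lemma eq_zero_of_add_self_eq_zero (hB : ∀ x : F, x ^ 3 + B ≠ 0) {T : (mordellCurve B).Point}
    (hT : T + T = 0) : T = 0 := by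
  rcases T with _ | @⟨x, y, h⟩
  · rfl
  by_cases hy : y = (mordellCurve B).negY x y
  · have hy0 : y = 0 := by
      rw [negY_eq, eq_neg_iff_add_eq_zero, ← two_mul] at hy
      exact (mul_eq_zero.mp hy).resolve_left two_ne_zero
    have := equation_iff.mp h.1
    rw [hy0] at this
    exact absurd (by linear_combination -this) (hB x)
  · exact absurd (by rwa [Point.add_self_of_Y_ne hy] at hT) (Point.some_ne_zero _)

lemma exists_duplication_eq_of_add_self_eq_some {x₀ y₀ : F}
    {h₀ : (mordellCurve B).Nonsingular x₀ y₀} {Q : (mordellCurve B).Point} (hQ : Q + Q = Point.some x₀ y₀ h₀) :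
    ∃ x : F, x ^ 4 - 8 * B * x = 4 * x₀ * (x ^ 3 + B) := by
  rcases Q with _ | @⟨x, y, h⟩
  · exact absurd hQ.symm (Point.some_ne_zero _)
  by_cases hy : y = (mordellCurve B).negY x y
  · exact absurd (by rw [← hQ, Point.add_self_of_Y_eq hy]) (Point.some_ne_zero h₀)
  rw [Point.add_self_of_Y_ne hy] at hQ
  injection hQ with hx₀
  have hy0 : y ≠ 0 := fun h0 ↦ hy (by rw [negY_eq, h0, neg_zero])
  have hx₀' : x₀ = (3 * x ^ 2 / (2 * y)) ^ 2 - 2 * x := by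
    rw [← hx₀, slope_of_Y_ne rfl hy, negY_eq]
    simp only [addX, mordellCurve]
    ring
  refine ⟨x, ?_⟩
  rw [hx₀']
  field_simp
  linear_combination 36 * x ^ 4 * equation_iff.mp h.1

end mordellCurve

/-- the point `P₁ = (1, 13)` lies on the elliptic curve `y² = x³ + 168` over
`ℚ` (the fiber above `(1:1)` of the surface `y² = x³ + 6(27z⁶ + w⁶)`) and has infinite
order in the Mordell–Weil group. -/
theorem stmt8 :
    letI W : WeierstrassCurve.Affine ℚ := { a₁ := 0, a₂ := 0, a₃ := 0, a₄ := 0, a₆ := 168 }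
    ∃ h : W.Nonsingular 1 13,
      ∀ n : ℕ, n ≠ 0 → n • (WeierstrassCurve.Affine.Point.some _ _ h) ≠ 0 := by
  have hP : (mordellCurve (168 : ℚ)).Nonsingular 1 13 := by
    rw [nonsingular_iff, mordellCurve.equation_iff]
    norm_num [mordellCurve]
  refine ⟨hP, fun n hn hnP ↦ ?_⟩
  have hnotDouble : ∀ Q : (mordellCurve (168 : ℚ)).Point, Q + Q ≠ .some 1 13 hP := fun Q hQ ↦ by
    obtain ⟨x, hx⟩ := mordellCurve.exists_duplication_eq_of_add_self_eq_some hQ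
    exact rat_quartic_ne_zero x (by linear_combination hx)
  exact not_isOfFinAddOrder_of_forall_add_self
    (fun _ ↦ mordellCurve.eq_zero_of_add_self_eq_zero rat_pow_three_add_168_ne_zero) hnotDouble
    (isOfFinAddOrder_iff_nsmul_eq_zero.mpr ⟨n, Nat.pos_of_ne_zero hn, hnP⟩)
end
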